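/- Let k ≥ 3 and r be positive integers with r < k, let p = (p_1,…,p_k) be a tuple of non-negative integers, let a ∈ {2,3,…,k−1} and D ⊆ [a−2]. Define K_{i,j} and 𝔖_{k,a} as follows: K_{i,i} = ∅ if i∈[a−2]∖D, K_{i,i} = [k] if i∈D∪{a−1}, K_{i,j} = ]i,j] for i∈{a−1,…,k−1}, j∈[k], (i,j) ≠ (a−1,a−1); 𝔖_{k,a} is the set of permutations π of [k] with π(i)=i for all i∈[a−2]. Then Σ sgn(π) = 0, where the sum is over all triples (S,f,π) with S∈S_{p,r}, f a surjection from [k−1] onto [r], and π∈𝔖_{k,a}, satisfying K_{i,π(i)} ⊆ S_{f(i)} for every i∈[k−1] and additionally f(a−1) = f(a). -/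

import Mathlib

open Finset

/-- The cyclic interval `]i,j]` of `[k] = {1,…,k}`, realized inside `ZMod k`
(the element `k` of `[k]` is represented by `0 : ZMod k`). -/
def cyc (k : ℕ) [NeZero k] (i j : ZMod k) : Finset (ZMod k) :=
  Finset.univ.filter fun x => 1 ≤ (x - i).val ∧ (x - i).val ≤ (j - i).val

/-- Membership in `𝒮_{p,r}` : each `j ∈ [k]` belongs to exactly `p j` of the sets `S_1,…,S_r`. -/
def SprMem (k r : ℕ) [NeZero k] (p : ZMod k → ℕ) (S : Fin r → Finset (ZMod k)) : Prop :=
  ∀ j : ZMod k, Nat.card {i : Fin r // j ∈ S i} = p j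

/-- Membership in `ℳ_{p,r}` : member of `𝒮_{p,r}` all of whose sets are proper subsets of `[k]`. -/
def MprMem (k r : ℕ) [NeZero k] (p : ZMod k → ℕ) (S : Fin r → Finset (ZMod k)) : Prop :=
  SprMem k r p S ∧ ∀ i, S i ≠ Finset.univ

/-- `|ℳ_{p,r}|`. -/
noncomputable def Mcard (k r : ℕ) [NeZero k] (p : ZMod k → ℕ) : ℕ :=
  Nat.card {S : Fin r → Finset (ZMod k) // MprMem k r p S}

/-- `|𝒮_{p,r}|`. -/
noncomputable def Scard (k r : ℕ) [NeZero k] (p : ZMod k → ℕ) : ℕ :=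
  Nat.card {S : Fin r → Finset (ZMod k) // SprMem k r p S}

/-- `|ℳ_{q,r}|` for an integer-valued tuple `q` (empty if some entry of `q` is negative). -/
noncomputable def McardZ (k r : ℕ) [NeZero k] (q : ZMod k → ℤ) : ℕ :=
  Nat.card {S : Fin r → Finset (ZMod k) //
    (∀ j : ZMod k, (Nat.card {i : Fin r // j ∈ S i} : ℤ) = q j) ∧ ∀ i, S i ≠ Finset.univ}

/-- `alphaRel k S i j` holds iff `j = α(i,S)`. -/
def alphaRel (k : ℕ) [NeZero k] (S : Finset (ZMod k)) (i j : ZMod k) : Prop :=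
  if S = Finset.univ then j = i else j ∉ S ∧ cyc k i (j - 1) ⊆ S

/-- `betaRel k S i j` holds iff `j = β(i,S)`. -/
def betaRel (k : ℕ) [NeZero k] (S : Finset (ZMod k)) (i j : ZMod k) : Prop :=
  if S = Finset.univ then j = i else j + 1 ∉ S ∧ cyc k i j ⊆ S

/-- `gammaRel k S i j` holds iff `j = γ(i,S)`. -/
def gammaRel (k : ℕ) [NeZero k] (S : Finset (ZMod k)) (i j : ZMod k) : Prop :=
  if S = Finset.univ then j = i
  else if i ∈ S then j = i - 1
  else j + 1 ∉ S ∧ cyc k i j ⊆ S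

/-- The digraph on `[k]` with the `k-1` arcs `(i, ζ(i, S_{f i}))` for `i ∈ [k-1]`
(the nonzero elements of `ZMod k`) is a tree, i.e. a spanning tree oriented toward
the root `k` (represented by `0`): following the arcs from any vertex reaches the root. -/
def GIsTree (k r : ℕ) [NeZero k] (zeta : Finset (ZMod k) → ZMod k → ZMod k → Prop)
    (S : Fin r → Finset (ZMod k)) (f : {i : ZMod k // i ≠ 0} → Fin r) : Prop :=
  ∃ g : ZMod k → ZMod k, g 0 = 0 ∧
    (∀ i : {i : ZMod k // i ≠ 0}, zeta (S (f i)) i.1 (g i.1)) ∧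
    ∀ x : ZMod k, ∃ n : ℕ, g^[n] x = 0

/-- Sample space: pairs of a tuple `S ∈ ℳ_{p,r}` and a surjection `f : [k-1] → [r]`,
with the uniform probability measure. -/
abbrev OmM (k r : ℕ) [NeZero k] (p : ZMod k → ℕ) : Type :=
  {om : (Fin r → Finset (ZMod k)) × ({i : ZMod k // i ≠ 0} → Fin r) //
    MprMem k r p om.1 ∧ Function.Surjective om.2}

/-- Sample space `Ω`: pairs of a tuple `S ∈ 𝒮_{p,r}` and a surjection `f : [k-1] → [r]`,
with the uniform probability measure. -/
abbrev OmS (k r : ℕ) [NeZero k] (p : ZMod k → ℕ) : Type :=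
  {om : (Fin r → Finset (ZMod k)) × ({i : ZMod k // i ≠ 0} → Fin r) //
    SprMem k r p om.1 ∧ Function.Surjective om.2}

/-- Uniform probability of an event `A` in a (finite) sample space `Om`. -/
noncomputable def PrU {Om : Type} (A : Set Om) : ℚ :=
  (Nat.card A : ℚ) / (Nat.card Om : ℚ)

/-- The `Pr`-determinant of a `k × k` matrix of events (rows and columns indexed by
`[k]`, i.e. by `ZMod k`). -/
noncomputable def Pdet {k : ℕ} [NeZero k] {Om : Type} (E : ZMod k → ZMod k → Set Om) : ℚ :=
  ∑ pi : Equiv.Perm (ZMod k), ((Equiv.Perm.sign pi : ℤ) : ℚ) * PrU (⋂ i : ZMod k, E i (pi i))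

/-- The matrix of events `M_α`: `M_{α,i,j} = I^{f(i)}_{i,j}` for `i ∈ [k-1]`, and the
row of `i = k` (i.e. `0`) is constant equal to `Ω`. -/
def Malpha (k r : ℕ) [NeZero k] (p : ZMod k → ℕ) (i j : ZMod k) : Set (OmS k r p) :=
  {om : OmS k r p | ∀ hi : i ≠ 0, cyc k i j ⊆ om.1.1 (om.1.2 ⟨i, hi⟩)}

/-- The matrix of events `M_β`: `M_{β,i,j} = J^{f(i)}_{i,j+1}` for `i ∈ [k-1]`, and the
row of `i = k` (i.e. `0`) is constant equal to `Ω`. -/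
def Mbeta (k r : ℕ) [NeZero k] (p : ZMod k → ℕ) (i j : ZMod k) : Set (OmS k r p) :=
  {om : OmS k r p | ∀ hi : i ≠ 0,
    if i = j + 1 then om.1.1 (om.1.2 ⟨i, hi⟩) = Finset.univ
    else cyc k i (j + 1) ⊆ om.1.1 (om.1.2 ⟨i, hi⟩)}

/-- Membership of `om` in the event `J^{f(i)}_{a,b}`. -/
def Jmem (k r : ℕ) [NeZero k] (p : ZMod k → ℕ) (om : OmS k r p)
    (i : {i : ZMod k // i ≠ 0}) (a b : ZMod k) : Prop :=
  if a = b then om.1.1 (om.1.2 i) = Finset.univ else cyc k a b ⊆ om.1.1 (om.1.2 i)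

/-- The sets `K_{i,j}` of Section 5.1 (for given `a ∈ {2,…,k-1}` and `D ⊆ [a-2]`):
`K_{i,i} = ∅` for `i ∈ [a-2] ∖ D`, `K_{i,i} = [k]` for `i ∈ D ∪ {a-1}`, and
`K_{i,j} = ]i,j]` for `i ∈ {a-1,…,k-1}`, `j ∈ [k]`, `(i,j) ≠ (a-1,a-1)`.
(The element `m ∈ [k]` is represented by `(m : ZMod k)`, so `i = a-1` means
`i.val + 1 = a`.) -/
def Kset (k a : ℕ) [NeZero k] (D : Finset (ZMod k)) (i j : ZMod k) : Finset (ZMod k) :=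
  if i = j then (if i.val + 1 = a ∨ i ∈ D then Finset.univ else ∅) else cyc k i j

/-- `H_{f,π,j} = ∪ { K_{i,π(i)} : i ∈ [k-1] ∖ {j}, f(i) = f(j) }`. -/
def Hset (k a r : ℕ) [NeZero k] (D : Finset (ZMod k))
    (f : {i : ZMod k // i ≠ 0} → Fin r) (pi : Equiv.Perm (ZMod k))
    (j : {i : ZMod k // i ≠ 0}) : Finset (ZMod k) :=
  (Finset.univ.filter fun i : {i : ZMod k // i ≠ 0} => i ≠ j ∧ f i = f j).biUnion
    (fun i => Kset k a D i.1 (pi i.1))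

/-!
Right multiplication by the transposition `(a-1 a)` is a sign-reversing involution on the
triples `(S, f, π)`. It preserves the constraints because `K_{a-1,x} = {a} ∪ ]a,x]` and
`K_{a,y} = ]a,y]`, so when `f(a-1) = f(a)` the two constraints on the common set
`S_{f(a)}` only say `a ∈ S_{f(a)}`, `]a,π(a-1)] ⊆ S_{f(a)}` and `]a,π(a)] ⊆ S_{f(a)}`,
which is symmetric in `π(a-1)` and `π(a)`.
-/

open Equiv

theorem ZMod.val_add_one_of_ne_neg_one {k : ℕ} [NeZero k] {w : ZMod k} (hw : w ≠ -1) :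
    (w + 1).val = w.val + 1 := by
  obtain ⟨n, rfl⟩ := Nat.exists_eq_succ_of_ne_zero (NeZero.ne k)
  have hwn : w.val ≠ n := fun h => hw (ZMod.val_injective _ (h.trans (ZMod.val_neg_one n).symm))
  exact Fin.val_add_one_of_lt (Fin.lt_last_iff_ne_last.mpr fun h => hwn (congrArg Fin.val h))

section Cyc

variable {k : ℕ} [NeZero k]

theorem mem_cyc {i j z : ZMod k} :
    z ∈ cyc k i j ↔ 1 ≤ (z - i).val ∧ (z - i).val ≤ (j - i).val := by
  simp [cyc]

theorem cyc_self (i : ZMod k) : cyc k i i = ∅ := by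
  ext z
  simp only [mem_cyc, sub_self, ZMod.val_zero, notMem_empty, iff_false]
  omega

theorem insert_cyc_add_one_self (i : ZMod k) : insert (i + 1) (cyc k (i + 1) i) = univ := by
  obtain ⟨n, rfl⟩ := Nat.exists_eq_succ_of_ne_zero (NeZero.ne k)
  ext z
  have hz : z - (i + 1) = 0 ↔ z = i + 1 := sub_eq_zero
  have hlt := ZMod.val_lt (z - (i + 1))
  simp only [mem_insert, mem_cyc, show i - (i + 1) = -1 by ring, ZMod.val_neg_one, mem_univ,
    iff_true, ← hz, ← ZMod.val_eq_zero]
  omega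

theorem cyc_eq_insert_cyc_add_one {i j : ZMod k} (h : j ≠ i) :
    cyc k i j = insert (i + 1) (cyc k (i + 1) j) := by
  obtain ⟨n, rfl⟩ := Nat.exists_eq_succ_of_ne_zero (NeZero.ne k)
  ext z
  obtain ⟨u, rfl⟩ : ∃ u, z = u + (i + 1) := ⟨z - (i + 1), by ring⟩
  obtain ⟨v, rfl⟩ : ∃ v, j = v + (i + 1) := ⟨j - (i + 1), by ring⟩
  have hv : v ≠ -1 := by rintro rfl; exact h (by ring)
  have hvlt := ZMod.val_lt (v + 1)
  simp only [mem_cyc, mem_insert, add_sub_cancel_right, add_eq_right,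
    show ∀ w : ZMod (n + 1), w + (i + 1) - i = w + 1 from fun w => by ring,
    ZMod.val_add_one_of_ne_neg_one hv] at hvlt ⊢
  by_cases hu : u = -1
  · subst hu
    have h1 : (-1 : ZMod (n + 1)) ≠ 0 := by
      intro h0
      have := ZMod.val_neg_one n
      rw [h0, ZMod.val_zero] at this
      omega
    simp only [neg_add_cancel, ZMod.val_zero, ZMod.val_neg_one, h1, false_or]
    omega
  · rw [ZMod.val_add_one_of_ne_neg_one hu, ← ZMod.val_eq_zero]
    omega

end Cyc

section Kset

variable {k a : ℕ} [NeZero k] {D : Finset (ZMod k)} {i : ZMod k}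

theorem Kset_of_val_add_one_eq (hi : i.val + 1 = a) (j : ZMod k) :
    Kset k a D i j = insert (i + 1) (cyc k (i + 1) j) := by
  unfold Kset
  split_ifs with hij h
  · subst hij; exact (insert_cyc_add_one_self i).symm
  · exact absurd (Or.inl hi) h
  · exact cyc_eq_insert_cyc_add_one (Ne.symm hij)

theorem Kset_of_val_add_one_ne (hi : i.val + 1 ≠ a) (hiD : i ∉ D) (j : ZMod k) :
    Kset k a D i j = cyc k i j := by
  unfold Kset
  split_ifs with hij h
  · exact absurd h (by tauto)
  · subst hij; exact (cyc_self i).symm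
  · rfl

theorem Kset_subset_swap (hi : i.val + 1 = a) (hi' : (i + 1).val + 1 ≠ a) (hiD : i + 1 ∉ D)
    (S : Finset (ZMod k)) (x y : ZMod k) :
    Kset k a D i x ⊆ S ∧ Kset k a D (i + 1) y ⊆ S ↔
      Kset k a D i y ⊆ S ∧ Kset k a D (i + 1) x ⊆ S := by
  simp only [Kset_of_val_add_one_eq hi, Kset_of_val_add_one_ne hi' hiD, insert_subset_iff]
  tauto

theorem forall_Kset_subset_mul_swap {r : ℕ} {S : Fin r → Finset (ZMod k)}
    {f : {i : ZMod k // i ≠ 0} → Fin r} {π : Perm (ZMod k)} {b c : {i : ZMod k // i ≠ 0}}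
    (hb : b.1.val + 1 = a) (hcb : c.1 = b.1 + 1) (hc : c.1.val + 1 ≠ a) (hcD : c.1 ∉ D)
    (hf : f b = f c) (hK : ∀ i : {i : ZMod k // i ≠ 0}, Kset k a D i.1 (π i.1) ⊆ S (f i)) :
    ∀ i : {i : ZMod k // i ≠ 0}, Kset k a D i.1 ((π * swap b.1 c.1) i.1) ⊆ S (f i) := by
  have hKc := hK c
  rw [← hf] at hKc
  obtain ⟨hKb', hKc'⟩ :=
    (Kset_subset_swap hb (hcb ▸ hc) (hcb ▸ hcD) (S (f b)) (π b.1) (π c.1)).mp ⟨hK b, hcb ▸ hKc⟩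
  intro i
  rcases eq_or_ne i b with rfl | hib
  · simpa using hKb'
  rcases eq_or_ne i c with rfl | hic
  · simpa [hcb, ← hf] using hKc'
  · simpa [swap_apply_of_ne_of_ne (Subtype.coe_ne_coe.mpr hib) (Subtype.coe_ne_coe.mpr hic)]
      using hK i

end Kset

theorem sum_sign_eq_zero_of_mul_swap_mem {α β ι : Type*} [Fintype ι] [DecidableEq ι]
    {s : Finset (α × β × Perm ι)} {x y : ι} (hxy : x ≠ y)
    (hs : ∀ z ∈ s, (z.1, z.2.1, z.2.2 * swap x y) ∈ s) :
    ∑ z ∈ s, (Perm.sign z.2.2 : ℤ) = 0 := by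
  refine sum_involution (fun z _ => (z.1, z.2.1, z.2.2 * swap x y)) ?_ ?_ hs ?_
  · intro z _
    simp [Perm.sign_mul, Perm.sign_swap hxy]
  · intro z _ _ h
    have h' : z.2.2 * swap x y = z.2.2 * 1 := by simpa using congrArg (·.2.2) h
    have hyx : y = x := by simpa [swap_apply_left] using congrArg (· x) (mul_left_cancel h')
    exact hxy hyx.symm
  · intro z _
    simp [mul_assoc]

open scoped Classical in
theorem signed_sum_W_general (k r : ℕ) [NeZero k]
    (p : ZMod k → ℕ) (a : ℕ) (ha : 2 ≤ a) (hak : a ≤ k - 1)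
    (D : Finset (ZMod k)) (hD : ∀ i ∈ D, 1 ≤ i.val ∧ i.val ≤ a - 2)
    (am aa : {i : ZMod k // i ≠ 0}) (ham : am.1 = (a : ZMod k) - 1)
    (haa : aa.1 = (a : ZMod k)) :
    ∑ x ∈ Finset.univ.filter (fun x : (Fin r → Finset (ZMod k)) ×
          ({i : ZMod k // i ≠ 0} → Fin r) × Equiv.Perm (ZMod k) =>
        SprMem k r p x.1 ∧ Function.Surjective x.2.1 ∧
        (∀ i : ZMod k, 1 ≤ i.val → i.val ≤ a - 2 → x.2.2 i = i) ∧
        (∀ i : {i : ZMod k // i ≠ 0}, Kset k a D i.1 (x.2.2 i.1) ⊆ x.1 (x.2.1 i)) ∧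
        x.2.1 am = x.2.1 aa),
      (Equiv.Perm.sign x.2.2 : ℤ) = 0 := by
  have haa_val : aa.1.val = a := by rw [haa, ZMod.val_cast_of_lt (by omega)]
  have ham_val : am.1.val + 1 = a := by
    rw [ham, ← Nat.cast_pred (by omega), ZMod.val_cast_of_lt (by omega)]
    omega
  have haa_succ : aa.1 = am.1 + 1 := by rw [ham, haa]; ring
  have hne : am.1 ≠ aa.1 := fun h => by have := congrArg ZMod.val h; omega
  apply sum_sign_eq_zero_of_mul_swap_mem hne
  rintro ⟨S, f, π⟩ hx
  simp only [mem_filter, mem_univ, true_and] at hx ⊢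
  obtain ⟨hS, hsurj, hfix, hK, hf⟩ := hx
  refine ⟨hS, hsurj, fun i h1 h2 => ?_, ?_, hf⟩
  · rw [Perm.mul_apply, swap_apply_of_ne_of_ne (by rintro rfl; omega) (by rintro rfl; omega),
      hfix i h1 h2]
  · exact forall_Kset_subset_mul_swap ham_val haa_succ (by omega)
      (fun h => by have := (hD _ h).2; omega) hf hK

open scoped Classical in
/-- Lemma 9 (`W = 0`): the signed count of triples `(S,f,π)` in `Ω(N^{a,D})` with
`f(a-1) = f(a)` is zero. Here `am` and `aa` denote the elements `a-1` and `a`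
of `[k-1]`. -/
theorem signed_sum_W (k r : ℕ) [NeZero k] (hk : 3 ≤ k) (hr : 0 < r) (hrk : r < k)
    (p : ZMod k → ℕ) (a : ℕ) (ha : 2 ≤ a) (hak : a ≤ k - 1)
    (D : Finset (ZMod k)) (hD : ∀ i ∈ D, 1 ≤ i.val ∧ i.val ≤ a - 2)
    (am aa : {i : ZMod k // i ≠ 0}) (ham : am.1 = (a : ZMod k) - 1)
    (haa : aa.1 = (a : ZMod k)) :
    ∑ x ∈ Finset.univ.filter (fun x : (Fin r → Finset (ZMod k)) ×
          ({i : ZMod k // i ≠ 0} → Fin r) × Equiv.Perm (ZMod k) =>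
        SprMem k r p x.1 ∧ Function.Surjective x.2.1 ∧
        (∀ i : ZMod k, 1 ≤ i.val → i.val ≤ a - 2 → x.2.2 i = i) ∧
        (∀ i : {i : ZMod k // i ≠ 0}, Kset k a D i.1 (x.2.2 i.1) ⊆ x.1 (x.2.1 i)) ∧
        x.2.1 am = x.2.1 aa),
      (Equiv.Perm.sign x.2.2 : ℤ) = 0 :=
  signed_sum_W_general k r p a ha hak D hD am aa ham haa
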